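/- Let m ≥ 1 and let J ⊆ A be the ideal generated by τ^m·x − 𝐟_(m−1), 𝐟_m, h·x, and h^(2m) (the ideal J_n for n = 2m−1). Then an element a of the quotient ring A/J is an additive torsion element (i.e. k·a = 0 for some integer k ≥ 1) if and only if a lies in the ideal of A/J generated by the class of ε. (Proposition 4.6(iii), case n = 2m−1.) -/

import Mathlib

/- Context: `A = ℤ[ε,τ,σ,h,x]/(2ε, τσ-1)` models `𝒜[h,x]` where
`𝒜 = ℤ[ε,τ,τ⁻¹]/(2ε)`, and for `m ≥ 0`,
`𝐟_m = ∑_{a+2b=m} C(a+b,b)·ε^(2a+1)·τ^b·h^(2b) ∈ A`. -/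

noncomputable section

open MvPolynomial

abbrev Apre : Type := MvPolynomial (Fin 5) ℤ  -- ε, τ, σ, h, x

def AI : Ideal Apre := Ideal.span {2 * X 0, X 1 * X 2 - 1}

abbrev A : Type := Apre ⧸ AI

def ε : A := Ideal.Quotient.mk AI (X 0)
def τ : A := Ideal.Quotient.mk AI (X 1)
def σ : A := Ideal.Quotient.mk AI (X 2)
def h : A := Ideal.Quotient.mk AI (X 3)
def x : A := Ideal.Quotient.mk AI (X 4)

def f (m : ℕ) : A :=
  ∑ b ∈ Finset.range (m / 2 + 1),
    (Nat.choose (m - b) b : A) * ε ^ (2 * (m - 2 * b) + 1) * τ ^ b * h ^ (2 * b)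

def J (m : ℕ) : Ideal A := Ideal.span {τ ^ m * x - f (m - 1), f m, h * x, h ^ (2 * m)}

/-! Modulo `ε`, the relation `τ ^ m * x = f (m - 1)` forces `x = 0`, because `τ` is a unit and
`ε ∣ f (m - 1)`. Hence `A ⧸ (J m ⊔ (ε))` is the Laurent ring `(ℤ[h] ⧸ (h ^ (2m)))[τ, τ⁻¹]`,
which has no additive torsion. Concretely, the ring map `A ⧸ J m → (ℤ[X] ⧸ (X ^ (2m)))[T;T⁻¹]`
killing `ε` and `x` has a left inverse modulo `ε`, so its kernel lies in `(ε)`; as `2 ε = 0`,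
the torsion elements of `A ⧸ J m` are exactly the elements of `(ε)`. -/

open LaurentPolynomial

theorem exists_zsmul_eq_zero_iff_mem_span_of_ker_le {R S : Type*} [Ring R] [Ring S]
    [IsAddTorsionFree S] (φ : R →+* S) {e : R} {n : ℤ} (hn : 1 ≤ n) (he : n • e = 0)
    (hker : RingHom.ker φ ≤ Ideal.span {e}) (a : R) :
    (∃ k : ℤ, 1 ≤ k ∧ k • a = 0) ↔ a ∈ Ideal.span {e} := by
  constructor
  · rintro ⟨k, hk, hka⟩
    refine hker ((IsAddTorsionFree.zsmul_eq_zero_iff_right (by lia : k ≠ 0)).mp ?_)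
    rw [← map_zsmul, hka, map_zero]
  · intro ha
    obtain ⟨c, rfl⟩ := Ideal.mem_span_singleton'.mp ha
    exact ⟨n, hn, by rw [← mul_smul_comm, he, mul_zero]⟩

instance {R : Type*} [CommRing R] [IsAddTorsionFree R] (n : ℕ) :
    IsAddTorsionFree (Polynomial R ⧸ Ideal.span {(Polynomial.X : Polynomial R) ^ n}) := by
  refine ⟨fun k hk a b hab => ?_⟩
  obtain ⟨p, rfl⟩ := Ideal.Quotient.mk_surjective a
  obtain ⟨q, rfl⟩ := Ideal.Quotient.mk_surjective b
  simp only [← map_nsmul, Ideal.Quotient.eq, Ideal.mem_span_singleton, Polynomial.X_pow_dvd_iff,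
    ← smul_sub, Polynomial.coeff_smul] at hab ⊢
  exact fun d hd => (nsmul_eq_zero_iff_right hk).mp (hab d hd)

instance {R : Type*} [Semiring R] [IsAddTorsionFree R] : IsAddTorsionFree R[T;T⁻¹] :=
  ⟨fun k _ _ _ hab => by
    ext n
    exact nsmul_right_injective ‹_› (congrArg (fun p : R[T;T⁻¹] => p.coeff n) hab :)⟩

theorem tau_mul_sigma : τ * σ = 1 := by
  rw [τ, σ, ← map_mul, ← sub_eq_zero, ← map_one (Ideal.Quotient.mk AI), ← map_sub,
    Ideal.Quotient.eq_zero_iff_mem]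
  exact Ideal.subset_span (by simp)

theorem two_zsmul_eps : (2 : ℤ) • ε = 0 := by
  rw [zsmul_eq_mul, Int.cast_ofNat, ε, ← map_ofNat (Ideal.Quotient.mk AI), ← map_mul,
    Ideal.Quotient.eq_zero_iff_mem]
  exact Ideal.subset_span (by simp)

theorem eps_dvd_f (n : ℕ) : ε ∣ f n :=
  Finset.dvd_sum fun _ _ =>
    (((dvd_pow_self ε (Nat.succ_ne_zero _)).mul_left _).mul_right _).mul_right _

abbrev TruncatedPoly (n : ℕ) : Type :=
  Polynomial ℤ ⧸ Ideal.span {(Polynomial.X : Polynomial ℤ) ^ n}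

def truncX (n : ℕ) : TruncatedPoly n := Ideal.Quotient.mk _ Polynomial.X

def laurentOfA (n : ℕ) : A →+* (TruncatedPoly n)[T;T⁻¹] :=
  Ideal.Quotient.lift AI (eval₂Hom (Int.castRingHom _) ![0, T 1, T (-1), C (truncX n), 0]) (by
    refine fun a ha => RingHom.mem_ker.1 ((Ideal.span_le (I := RingHom.ker _)).2 ?_ ha)
    simp only [Set.insert_subset_iff, Set.singleton_subset_iff, SetLike.mem_coe, RingHom.mem_ker]
    refine ⟨by simp, ?_⟩
    rw [map_sub, map_mul, map_one, eval₂Hom_X', eval₂Hom_X']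
    change T 1 * T (-1) - 1 = 0
    rw [← T_add, add_neg_cancel, T_zero, sub_self])

theorem laurentOfA_eps (n : ℕ) : laurentOfA n ε = 0 := by
  rw [laurentOfA, ε, Ideal.Quotient.lift_mk, eval₂Hom_X']; rfl

theorem laurentOfA_tau (n : ℕ) : laurentOfA n τ = T 1 := by
  rw [laurentOfA, τ, Ideal.Quotient.lift_mk, eval₂Hom_X']; rfl

theorem laurentOfA_sigma (n : ℕ) : laurentOfA n σ = T (-1) := by
  rw [laurentOfA, σ, Ideal.Quotient.lift_mk, eval₂Hom_X']; rfl

theorem laurentOfA_x (n : ℕ) : laurentOfA n x = 0 := by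
  rw [laurentOfA, x, Ideal.Quotient.lift_mk, eval₂Hom_X']; rfl

theorem laurentOfA_h (n : ℕ) : laurentOfA n h = LaurentPolynomial.C (truncX n) := by
  rw [laurentOfA, h, Ideal.Quotient.lift_mk, eval₂Hom_X']; rfl

theorem laurentOfA_f (n k : ℕ) : laurentOfA n (f k) = 0 := by
  obtain ⟨c, hc⟩ := eps_dvd_f k
  rw [hc, map_mul, laurentOfA_eps, zero_mul]

def laurentOfAModJ (m : ℕ) : A ⧸ J m →+* (TruncatedPoly (2 * m))[T;T⁻¹] :=
  Ideal.Quotient.lift (J m) (laurentOfA (2 * m)) (by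
    refine fun a ha => RingHom.mem_ker.1 ((Ideal.span_le (I := RingHom.ker _)).2 ?_ ha)
    simp only [Set.insert_subset_iff, Set.singleton_subset_iff, SetLike.mem_coe, RingHom.mem_ker]
    refine ⟨?_, laurentOfA_f _ _, ?_, ?_⟩
    · rw [map_sub, map_mul, laurentOfA_x, laurentOfA_f, mul_zero, sub_zero]
    · rw [map_mul, laurentOfA_x, mul_zero]
    · rw [map_pow, laurentOfA_h, ← map_pow, truncX, ← map_pow,
        Ideal.Quotient.eq_zero_iff_mem.2 (Ideal.mem_span_singleton_self _), map_zero])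

abbrev ModEps (m : ℕ) : Type := A ⧸ (J m ⊔ Ideal.span {ε})

theorem mk_eq_zero_of_mem_J {m : ℕ} {a : A} (ha : a ∈ J m) :
    Ideal.Quotient.mk (J m ⊔ Ideal.span {ε}) a = 0 :=
  Ideal.Quotient.eq_zero_iff_mem.2 (Ideal.mem_sup_left ha)

theorem mk_eps (m : ℕ) : Ideal.Quotient.mk (J m ⊔ Ideal.span {ε}) ε = 0 :=
  Ideal.Quotient.eq_zero_iff_mem.2 (Ideal.mem_sup_right (Ideal.mem_span_singleton_self _))

theorem mk_f (m k : ℕ) : Ideal.Quotient.mk (J m ⊔ Ideal.span {ε}) (f k) = 0 := by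
  obtain ⟨c, hc⟩ := eps_dvd_f k
  rw [hc, map_mul, mk_eps, zero_mul]

theorem mk_x (m : ℕ) : Ideal.Quotient.mk (J m ⊔ Ideal.span {ε}) x = 0 := by
  have hτx : Ideal.Quotient.mk (J m ⊔ Ideal.span {ε}) (τ ^ m * x) = 0 := by
    rw [← sub_add_cancel (τ ^ m * x) (f (m - 1)), map_add,
      mk_eq_zero_of_mem_J (Ideal.subset_span (by simp)), mk_f, add_zero]
  -- `x = σ ^ m * (τ ^ m * x)`
  rw [← one_mul x, ← one_pow m, ← tau_mul_sigma, mul_comm τ, mul_pow, mul_assoc, map_mul, hτx,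
    mul_zero]

def tauUnit (m : ℕ) : (ModEps m)ˣ :=
  Units.mkOfMulEqOne (Ideal.Quotient.mk _ τ) (Ideal.Quotient.mk _ σ)
    (by rw [← map_mul, tau_mul_sigma, map_one])

def modEpsOfLaurent (m : ℕ) : (TruncatedPoly (2 * m))[T;T⁻¹] →+* ModEps m :=
  LaurentPolynomial.eval₂ (R := TruncatedPoly (2 * m)) (S := ModEps m)
    (Ideal.Quotient.lift _ (Polynomial.eval₂RingHom (Int.castRingHom _) (Ideal.Quotient.mk _ h)) (by
      refine fun p hp =>
        RingHom.mem_ker.1 ((Ideal.span_singleton_le_iff_mem (RingHom.ker _)).2 ?_ hp)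
      rw [RingHom.mem_ker, map_pow, Polynomial.coe_eval₂RingHom, Polynomial.eval₂_X, ← map_pow]
      exact mk_eq_zero_of_mem_J (Ideal.subset_span (by simp))))
    (tauUnit m)

theorem modEpsOfLaurent_comp_laurentOfA (m : ℕ) :
    (modEpsOfLaurent m).comp (laurentOfA (2 * m)) = Ideal.Quotient.mk (J m ⊔ Ideal.span {ε}) := by
  refine Ideal.Quotient.ringHom_ext (MvPolynomial.ringHom_ext (fun _ => by simp) fun i => ?_)
  fin_cases i
  · show modEpsOfLaurent m (laurentOfA _ ε) = Ideal.Quotient.mk _ ε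
    rw [laurentOfA_eps, map_zero, mk_eps]
  · show modEpsOfLaurent m (laurentOfA _ τ) = Ideal.Quotient.mk _ τ
    simp [laurentOfA_tau, modEpsOfLaurent, tauUnit]
  · show modEpsOfLaurent m (laurentOfA _ σ) = Ideal.Quotient.mk _ σ
    simp only [laurentOfA_sigma, modEpsOfLaurent, eval₂_T, zpow_neg, zpow_one]
    rfl
  · show modEpsOfLaurent m (laurentOfA _ h) = Ideal.Quotient.mk _ h
    simp [laurentOfA_h, modEpsOfLaurent, truncX]
  · show modEpsOfLaurent m (laurentOfA _ x) = Ideal.Quotient.mk _ x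
    rw [laurentOfA_x, map_zero, mk_x]

theorem ker_laurentOfAModJ_le (m : ℕ) :
    RingHom.ker (laurentOfAModJ m) ≤ Ideal.span {Ideal.Quotient.mk (J m) ε} := by
  intro a ha
  obtain ⟨b, rfl⟩ := Ideal.Quotient.mk_surjective a
  have hb : b ∈ J m ⊔ Ideal.span {ε} := by
    rw [← Ideal.Quotient.eq_zero_iff_mem, ← modEpsOfLaurent_comp_laurentOfA, RingHom.comp_apply]
    rw [RingHom.mem_ker, laurentOfAModJ, Ideal.Quotient.lift_mk] at ha
    rw [ha, map_zero]
  simpa only [Ideal.map_sup, Ideal.map_quotient_self, bot_sup_eq, Ideal.map_span,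
    Set.image_singleton] using Ideal.mem_map_of_mem (Ideal.Quotient.mk (J m)) hb

theorem torsion_eq_eps_ideal_odd_general (m : ℕ) (a : A ⧸ J m) :
    (∃ k : ℤ, 1 ≤ k ∧ k • a = 0) ↔ a ∈ Ideal.span {Ideal.Quotient.mk (J m) ε} := by
  have two_zsmul_mk_eps : (2 : ℤ) • Ideal.Quotient.mk (J m) ε = 0 := by
    rw [← map_zsmul, two_zsmul_eps, map_zero]
  exact exists_zsmul_eq_zero_iff_mem_span_of_ker_le (laurentOfAModJ m) one_le_two two_zsmul_mk_eps
    (ker_laurentOfAModJ_le m) a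

theorem torsion_eq_eps_ideal_odd (m : ℕ) (hm : 1 ≤ m) (a : A ⧸ J m) :
    (∃ k : ℤ, 1 ≤ k ∧ k • a = 0) ↔ a ∈ Ideal.span {Ideal.Quotient.mk (J m) ε} :=
  torsion_eq_eps_ideal_odd_general m a

end
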